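/- arXiv:2108.06673 — 3 statements merged into one kernel-verified Lean document; each statement's English description precedes it below -/
import Mathlib

section
/- Let (I,(·,·)) be a Cartan datum, σ an admissible diagram automorphism, m ≥ 1, τ = σ^m, and let σ̄ be the permutation induced by σ on the set I^τ of τ-orbits, acting on the induced Cartan datum X^τ = (I^τ,(·,·)_τ). Then the map sending the τ-orbit of i to the σ-orbit of i induces a bijection between the set of σ̄-orbits on I^τ and the set of σ-orbits on I, and under this bijection the Cartan datum induced from (X^τ, σ̄) coincides with the Cartan datum induced from ((I,(·,·)), σ): for all corresponding orbits, (α_{η̃},α_{η̃})_2 = (α_η,α_η)_1 and (α_{η̃},α_{η̃'})_2 = (α_η,α_{η'})_1, where (·,·)_2 is the form induced from (X^τ,σ̄) and (·,·)_1 the form induced from ((I,(·,·)),σ). -/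
/-!
The `τ`-orbits of the points of a `σ`-orbit `η` partition `η`, since `τ = σ ^ m` has finer
orbits than `σ`; and as `σ` commutes with `τ`, it carries `τ`-orbits bijectively onto `τ`-orbits,
so all the `τ`-orbits inside `η` have the same size. Both identities for the induced forms are
then a regrouping of the sum over `η` along this partition.
-/

noncomputable section

open Finset

/-- The `σ`-orbit of `i`, as a `Finset`. -/
def orbitF {I : Type} [Fintype I] [DecidableEq I] (σ : Equiv.Perm I) (i : I) : Finset I :=
  Finset.univ.filter (fun j => σ.SameCycle i j)

/-- The `σ̄`-orbit of the `τ`-orbit of `i`, as a `Finset` of `Finset`s: it is the set of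
`τ`-orbits of the points of the `σ`-orbit of `i`. -/
def orbitBar {I : Type} [Fintype I] [DecidableEq I] (σ τ : Equiv.Perm I) (i : I) :
    Finset (Finset I) :=
  (orbitF σ i).image (orbitF τ)

open Equiv

section

variable {I : Type} [Fintype I] [DecidableEq I]

theorem mem_orbitF {σ : Perm I} {i j : I} : j ∈ orbitF σ i ↔ σ.SameCycle i j := by
  simp [orbitF]

theorem orbitF_eq_iff {σ : Perm I} {i j : I} : orbitF σ i = orbitF σ j ↔ σ.SameCycle i j := by
  refine ⟨fun h => mem_orbitF.1 (h ▸ mem_orbitF.2 .rfl), fun h => ?_⟩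
  ext x
  simp only [mem_orbitF]
  exact ⟨h.symm.trans, h.trans⟩

theorem disjoint_orbitF {σ : Perm I} {i j : I} (h : orbitF σ i ≠ orbitF σ j) :
    Disjoint (orbitF σ i) (orbitF σ j) :=
  disjoint_left.2 fun _ hi hj =>
    h (orbitF_eq_iff.2 ((mem_orbitF.1 hi).trans (mem_orbitF.1 hj).symm))

theorem orbitF_apply_of_commute {σ τ : Perm I} (h : Commute σ τ) (k : I) :
    orbitF τ (σ k) = (orbitF τ k).map σ.toEmbedding := by
  ext j
  have hconj : σ * τ * σ⁻¹ = τ := by rw [h.eq, mul_inv_cancel_right]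
  rw [mem_map_equiv, mem_orbitF, mem_orbitF, ← hconj, Perm.sameCycle_conj, hconj]
  simp

theorem card_orbitF_pow_of_sameCycle {σ : Perm I} (m : ℕ) {i k : I} (h : σ.SameCycle i k) :
    #(orbitF (σ ^ m) k) = #(orbitF (σ ^ m) i) := by
  obtain ⟨n, rfl⟩ := h
  rw [orbitF_apply_of_commute (((Commute.refl σ).zpow_left n).pow_right m), card_map]

theorem biUnion_orbitBar (σ : Perm I) (m : ℕ) (i : I) :
    (orbitBar σ (σ ^ m) i).biUnion id = orbitF σ i := by
  ext x
  simp only [mem_biUnion, orbitBar, mem_image, id_eq]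
  constructor
  · rintro ⟨_, ⟨k, hk, rfl⟩, hx⟩
    exact mem_orbitF.2 ((mem_orbitF.1 hk).trans (mem_orbitF.1 hx).of_pow)
  · exact fun hx => ⟨_, ⟨x, hx, rfl⟩, mem_orbitF.2 .rfl⟩

theorem pairwiseDisjoint_orbitBar (σ τ : Perm I) (i : I) :
    (orbitBar σ τ i : Set (Finset I)).PairwiseDisjoint id := by
  rintro _ hγ _ hγ' hne
  simp only [orbitBar, coe_image, Set.mem_image] at hγ hγ'
  obtain ⟨k, -, rfl⟩ := hγ
  obtain ⟨k', -, rfl⟩ := hγ'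
  exact disjoint_orbitF hne

theorem orbitBar_eq_iff {σ : Perm I} {m : ℕ} {i j : I} :
    orbitBar σ (σ ^ m) i = orbitBar σ (σ ^ m) j ↔ orbitF σ i = orbitF σ j := by
  refine ⟨fun h => ?_, fun h => by rw [orbitBar, h, orbitBar]⟩
  simpa only [biUnion_orbitBar] using congrArg (·.biUnion id) h

theorem card_orbitBar_mul_card_orbitF_pow (σ : Perm I) (m : ℕ) (i : I) :
    #(orbitBar σ (σ ^ m) i) * #(orbitF (σ ^ m) i) = #(orbitF σ i) := by
  have hconst : ∀ γ ∈ orbitBar σ (σ ^ m) i, #(id γ) = #(orbitF (σ ^ m) i) := by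
    intro γ hγ
    obtain ⟨k, hk, rfl⟩ := mem_image.1 hγ
    exact card_orbitF_pow_of_sameCycle m (mem_orbitF.1 hk)
  rw [← biUnion_orbitBar σ m i, card_biUnion (pairwiseDisjoint_orbitBar σ _ i),
    sum_const_nat hconst]

theorem sum_orbitBar {M : Type*} [AddCommMonoid M] (σ : Perm I) (m : ℕ) (i : I) (f : I → M) :
    ∑ γ ∈ orbitBar σ (σ ^ m) i, ∑ a ∈ γ, f a = ∑ a ∈ orbitF σ i, f a := by
  rw [← biUnion_orbitBar σ m i, sum_biUnion (pairwiseDisjoint_orbitBar σ _ i)]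
  rfl

theorem sum_orbitBar_sum_orbitBar {M : Type*} [AddCommMonoid M] (σ : Perm I) (m : ℕ)
    (i j : I) (f : I → I → M) :
    ∑ γ ∈ orbitBar σ (σ ^ m) i, ∑ γ' ∈ orbitBar σ (σ ^ m) j, ∑ a ∈ γ, ∑ b ∈ γ', f a b =
      ∑ a ∈ orbitF σ i, ∑ b ∈ orbitF σ j, f a b := by
  rw [← sum_orbitBar σ m i]
  refine sum_congr rfl fun γ _ => ?_
  rw [sum_comm]
  exact sum_congr rfl fun a _ => sum_orbitBar σ m j (f a)

end

theorem stmt2_general {I : Type} [Fintype I] [DecidableEq I]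
    (form : I → I → ℤ)
    (σ : Equiv.Perm I)
    (m : ℕ) :
    -- the map (τ-orbit of i) ↦ (σ-orbit of i) induces a bijection between the set of
    -- σ̄-orbits on I^τ and the set of σ-orbits on I
    (∀ i j : I, orbitBar σ (σ ^ m) i = orbitBar σ (σ ^ m) j ↔ orbitF σ i = orbitF σ j) ∧
    -- diagonal values agree: (α_{η̃},α_{η̃})_2 = |η̃|·(α_γ,α_γ)_τ = |η|·(α_i,α_i) = (α_η,α_η)_1
    (∀ i : I,
      ((orbitBar σ (σ ^ m) i).card : ℤ) * ((orbitF (σ ^ m) i).card * form i i) =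
        (orbitF σ i).card * form i i) ∧
    -- off-diagonal values agree: (α_{η̃},α_{η̃'})_2 = Σ_{γ∈η̃,γ'∈η̃'} (α_γ,α_{γ'})_τ
    --                            = Σ_{a∈η,b∈η'} (α_a,α_b) = (α_η,α_{η'})_1
    (∀ i j : I, orbitF σ i ≠ orbitF σ j →
      (∑ γ ∈ orbitBar σ (σ ^ m) i, ∑ γ' ∈ orbitBar σ (σ ^ m) j,
        ∑ a ∈ γ, ∑ b ∈ γ', form a b) =
      ∑ a ∈ orbitF σ i, ∑ b ∈ orbitF σ j, form a b) := by
  refine ⟨fun i j => orbitBar_eq_iff, fun i => ?_,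
    fun i j _ => sum_orbitBar_sum_orbitBar σ m i j form⟩
  rw [← mul_assoc, ← card_orbitBar_mul_card_orbitF_pow σ m i, Nat.cast_mul]

/-- for a Cartan datum `(I,(·,·))` with an admissible diagram automorphism
`σ`, `m ≥ 1`, `τ = σ^m`, and `σ̄` the induced permutation of the set `I^τ` of `τ`-orbits:
sending the `τ`-orbit of `i` to the `σ`-orbit of `i` induces a bijection between the
`σ̄`-orbits on `I^τ` and the `σ`-orbits on `I`, under which the Cartan datum induced
from `(X^τ,σ̄)` coincides with the one induced from `((I,(·,·)),σ)`:
`(α_{η̃},α_{η̃})_2 = (α_η,α_η)_1` and `(α_{η̃},α_{η̃'})_2 = (α_η,α_{η'})_1`. -/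
theorem stmt2 {I : Type} [Fintype I] [DecidableEq I] [Nonempty I]
    (form : I → I → ℤ)
    (hsymm : ∀ i j, form i j = form j i)
    (hdiag_pos : ∀ i, 0 < form i i) (hdiag_even : ∀ i, 2 ∣ form i i)
    (hoff : ∀ i j, i ≠ j → 2 * form i j ≤ 0 ∧ form i i ∣ 2 * form i j)
    (σ : Equiv.Perm I)
    (hform : ∀ i j, form (σ i) (σ j) = form i j)
    (hadm : ∀ i j, i ≠ j → σ.SameCycle i j → form i j = 0)
    (m : ℕ) (hm : 1 ≤ m) :
    -- the map (τ-orbit of i) ↦ (σ-orbit of i) induces a bijection between the set of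
    -- σ̄-orbits on I^τ and the set of σ-orbits on I
    (∀ i j : I, orbitBar σ (σ ^ m) i = orbitBar σ (σ ^ m) j ↔ orbitF σ i = orbitF σ j) ∧
    -- diagonal values agree: (α_{η̃},α_{η̃})_2 = |η̃|·(α_γ,α_γ)_τ = |η|·(α_i,α_i) = (α_η,α_η)_1
    (∀ i : I,
      ((orbitBar σ (σ ^ m) i).card : ℤ) * ((orbitF (σ ^ m) i).card * form i i) =
        (orbitF σ i).card * form i i) ∧
    -- off-diagonal values agree: (α_{η̃},α_{η̃'})_2 = Σ_{γ∈η̃,γ'∈η̃'} (α_γ,α_{γ'})_τ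
    --                            = Σ_{a∈η,b∈η'} (α_a,α_b) = (α_η,α_{η'})_1
    (∀ i j : I, orbitF σ i ≠ orbitF σ j →
      (∑ γ ∈ orbitBar σ (σ ^ m) i, ∑ γ' ∈ orbitBar σ (σ ^ m) j,
        ∑ a ∈ γ, ∑ b ∈ γ', form a b) =
      ∑ a ∈ orbitF σ i, ∑ b ∈ orbitF σ j, form a b) :=
  stmt2_general form σ m
end
end

section
/- With n = 2: for every integer k ≥ 0 and every ℓ ∈ ℕ, the identity (k, ℓ) = Σ_{s=max(1, r−k)}^{r} (−1)^{s−1} A(k,s) · (r−s, ℓ+s+k−r) holds in V_2 (for 1 ≤ s < r−k the coefficient A(k,s) vanishes, since [k ¦ r−s] = 0 when 0 ≤ k < r−s, so the restriction of the summation range loses nothing). -/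
noncomputable section

open Finset

/-- The field `ℚ(q)` of rational functions. -/
abbrev K : Type := RatFunc ℚ

/-- The variable `q`. -/
def q : K := RatFunc.X

/-- The balanced `q`-integer `[n] = (q^n - q^{-n})/(q - q^{-1})`. -/
def qint (n : ℤ) : K := (q ^ n - q ^ (-n)) / (q - q⁻¹)

/-- The `q`-factorial `[m]! = [1][2]⋯[m]`. -/
def qfact (m : ℕ) : K := ∏ t ∈ Finset.range m, qint (t + 1)

/-- The `q`-binomial coefficient `[n ¦ m] = [n][n-1]⋯[n-m+1]/[m]!`. -/
def qbinom (n : ℤ) (m : ℕ) : K := (∏ t ∈ Finset.range m, qint (n - t)) / qfact m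

/-- The tuple `a(i,j)` obtained from `a` by replacing the pair of entries at the
(0-based) positions `i, i+1` by `(a_i − j, a_{i+1} + j)`. -/
def tupleRepl {n : ℕ} (a : Fin n → ℕ) (i : ℕ) (h : i + 1 < n) (j : ℕ) : Fin n → ℕ :=
  fun t =>
    if t = (⟨i, by omega⟩ : Fin n) then a ⟨i, by omega⟩ - j
    else if t = (⟨i + 1, h⟩ : Fin n) then a ⟨i + 1, h⟩ + j
    else a t

/-- The set of spanning elements of the subspace `R_n` of relations:
`Σ_{j=0}^{r} (−1)^j [r ¦ j] · a(i,j)` for `a ∈ ℕ^n` and a position `i` with `a_i ≥ r`. -/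
def relSet (r n : ℕ) : Set ((Fin n → ℕ) →₀ K) :=
  { x | ∃ (a : Fin n → ℕ) (i : ℕ) (h : i + 1 < n), r ≤ a ⟨i, by omega⟩ ∧
      x = ∑ j ∈ Finset.range (r + 1),
            ((-1 : K) ^ j * qbinom (r : ℤ) j) • Finsupp.single (tupleRepl a i h j) (1 : K) }

/-- The coefficient `A(k,s) = [s+k−r−1 ¦ s−1] · [k ¦ r−s]`. -/
def Acoef (r : ℕ) (k : ℤ) (s : ℕ) : K := qbinom ((s : ℤ) + k - (r : ℤ) - 1) (s - 1) * qbinom k (r - s)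

/-! Induction on `k`. For `k < r` the only nonzero coefficient on the right is
`A(k, r - k) = (-1)^(r-k-1)`, and the identity is trivial. For `k ≥ r` the relation at `(k, ℓ)`
expresses `(k, ℓ)` through the tuples `(k - j, ℓ + j)`, `1 ≤ j ≤ r`, to which the induction
hypothesis applies; what is left is the coefficient identity `Σ_j (-1)^j [r ¦ j] A(k - j, s) = 0`.
Up to a constant, `A(k - j, s)` is a product of `r - 1` factors `[c - j]`; expanded in powers of
`q^j` it only involves `z^j` with `z = q^(2i+1-r)`, `i < r`, and each such `z` is a root of
`Σ_j (-1)^j [r ¦ j] z^j = ∏_{i<r} (1 - q^(r-1-2i) z)` (the `q`-binomial theorem). -/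

lemma q_ne_zero : q ≠ 0 := RatFunc.X_ne_zero

lemma q_pow_ne_one {m : ℕ} (hm : m ≠ 0) : q ^ m ≠ 1 := by
  intro h
  apply RatFunc.transcendental_X (K := ℚ)
  refine ⟨Polynomial.X ^ m - Polynomial.C 1,
    Polynomial.X_pow_sub_C_ne_zero (Nat.pos_of_ne_zero hm) 1, ?_⟩
  simpa [q, sub_eq_zero] using h

lemma q_zpow_ne_one {n : ℤ} (hn : n ≠ 0) : q ^ n ≠ 1 := by
  obtain ⟨m, rfl | rfl⟩ := Int.eq_nat_or_neg n
  · exact_mod_cast q_pow_ne_one (m := m) (by omega)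
  · simpa using q_pow_ne_one (m := m) (by omega)

lemma q_zpow_sub_zpow_neg_ne_zero {n : ℤ} (hn : n ≠ 0) : q ^ n - q ^ (-n) ≠ 0 := by
  intro h
  apply q_zpow_ne_one (n := n + n) (by omega)
  rw [zpow_add₀ q_ne_zero]
  nth_rw 1 [sub_eq_zero.mp h]
  rw [← zpow_add₀ q_ne_zero, neg_add_cancel, zpow_zero]

lemma q_sub_q_inv_ne_zero : q - q⁻¹ ≠ 0 := by
  simpa using q_zpow_sub_zpow_neg_ne_zero one_ne_zero

lemma qint_ne_zero {n : ℤ} (hn : n ≠ 0) : qint n ≠ 0 :=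
  div_ne_zero (q_zpow_sub_zpow_neg_ne_zero hn) q_sub_q_inv_ne_zero

lemma qint_zero : qint 0 = 0 := by simp [qint]

lemma qint_neg (n : ℤ) : qint (-n) = -qint n := by
  rw [qint, qint, neg_neg, ← neg_div, neg_sub]

lemma qfact_ne_zero (m : ℕ) : qfact m ≠ 0 :=
  prod_ne_zero_iff.2 fun _ _ => qint_ne_zero (by omega)

lemma qbinom_zero_right (n : ℤ) : qbinom n 0 = 1 := by simp [qbinom, qfact]

lemma qbinom_natCast_of_lt {n m : ℕ} (h : n < m) : qbinom n m = 0 := by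
  rw [qbinom, prod_eq_zero (mem_range.2 h) (by simp [qint_zero]), zero_div]

lemma qbinom_self (n : ℕ) : qbinom n n = 1 := by
  rw [qbinom, div_eq_one_iff_eq (qfact_ne_zero n), qfact, ← prod_range_reflect]
  refine prod_congr rfl fun t ht => congrArg qint ?_
  simp only [mem_range] at ht
  omega

lemma qbinom_neg_one (m : ℕ) : qbinom (-1) m = (-1) ^ m := by
  have h : ∀ t : ℕ, qint (-1 - t) = -1 * qint (t + 1) := fun t => by
    rw [show (-1 - t : ℤ) = -(t + 1) by ring, qint_neg, neg_one_mul]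
  rw [qbinom, prod_congr rfl fun t _ => h t, prod_mul_distrib, prod_const,
    card_range, ← qfact, mul_div_assoc, div_self (qfact_ne_zero m), mul_one]

lemma qint_pascal (n : ℤ) (j : ℕ) :
    q ^ (-(j + 1 : ℤ)) * qint (n - j) + q ^ (n - j) * qint (j + 1) = qint (n + 1) := by
  simp only [qint, ← mul_div_assoc, ← add_div, mul_sub, ← zpow_add₀ q_ne_zero]
  ring_nf

lemma qbinom_succ_succ (n : ℤ) (j : ℕ) :
    qbinom (n + 1) (j + 1)
      = q ^ (-(j + 1 : ℤ)) * qbinom n (j + 1) + q ^ (n - j) * qbinom n j := by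
  set P := ∏ t ∈ range j, qint (n - t) with hP
  have hnum₁ : ∏ t ∈ range (j + 1), qint (n + 1 - t) = P * qint (n + 1) := by
    rw [prod_range_succ']
    congr 1
    · exact prod_congr rfl fun t _ => by push_cast; ring_nf
    · simp
  have hnum₂ : ∏ t ∈ range (j + 1), qint (n - t) = P * qint (n - j) :=
    prod_range_succ _ _
  have hfact : qfact (j + 1) = qfact j * qint (j + 1) := by
    rw [qfact, prod_range_succ, ← qfact]
  have h₁ := qfact_ne_zero j
  have h₂ : qint (j + 1) ≠ 0 := qint_ne_zero (by omega)
  rw [qbinom, qbinom, qbinom, hnum₁, hnum₂, hfact]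
  field_simp
  rw [← hP]
  linear_combination P * (qint_pascal n j).symm

theorem sum_range_qbinom_mul_pow (r : ℕ) (z : K) :
    ∑ j ∈ range (r + 1), (-1) ^ j * qbinom r j * z ^ j
      = ∏ i ∈ range r, (1 - q ^ ((r : ℤ) - 1 - 2 * i) * z) := by
  induction r generalizing z with
  | zero => simp [qbinom_zero_right]
  | succ r ih =>
    have hpow (n : ℕ) : (q⁻¹ * z) ^ n = q ^ (-(n : ℤ)) * z ^ n := by
      rw [mul_pow, inv_pow, ← zpow_natCast, ← zpow_neg]
    have hshift (w : K) : ∑ j ∈ range (r + 1), (-1) ^ j * qbinom r j * w ^ j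
        = 1 + ∑ j ∈ range (r + 1), (-1) ^ (j + 1) * qbinom r (j + 1) * w ^ (j + 1) := by
      rw [sum_range_succ' _ r, sum_range_succ _ r]
      simp [qbinom_zero_right, qbinom_natCast_of_lt (Nat.lt_succ_self r), add_comm]
    have hterm (j : ℕ) : (-1) ^ (j + 1) * qbinom ((r + 1 : ℕ) : ℤ) (j + 1) * z ^ (j + 1)
        = (-1) ^ (j + 1) * qbinom r (j + 1) * (q⁻¹ * z) ^ (j + 1)
          - q ^ (r : ℤ) * z * ((-1) ^ j * qbinom r j * (q⁻¹ * z) ^ j) := by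
      rw [Nat.cast_succ, qbinom_succ_succ, hpow, hpow, sub_eq_add_neg (r : ℤ),
        zpow_add₀ q_ne_zero]
      push_cast
      ring
    calc ∑ j ∈ range (r + 1 + 1), (-1) ^ j * qbinom ((r + 1 : ℕ) : ℤ) j * z ^ j
        = (1 - q ^ (r : ℤ) * z)
            * ∑ j ∈ range (r + 1), (-1) ^ j * qbinom r j * (q⁻¹ * z) ^ j := by
          rw [sum_range_succ', sum_congr rfl fun j _ => hterm j, sum_sub_distrib,
            ← mul_sum, hshift]
          simp only [zpow_natCast, pow_zero, Nat.cast_add, Nat.cast_one, qbinom_zero_right, mul_one]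
          ring
      _ = ∏ i ∈ range (r + 1), (1 - q ^ (((r + 1 : ℕ) : ℤ) - 1 - 2 * i) * z) := by
          rw [ih, prod_range_succ', mul_comm]
          congr 1
          · refine prod_congr rfl fun i _ => ?_
            rw [← zpow_neg_one, ← mul_assoc, ← zpow_add₀ q_ne_zero]
            push_cast
            ring_nf
          · push_cast
            ring_nf

lemma sum_range_qbinom_mul_zpow_eq_zero {r i : ℕ} (hi : i < r) :
    ∑ j ∈ range (r + 1), (-1) ^ j * qbinom r j * (q ^ (2 * (i : ℤ) + 1 - r)) ^ j = 0 := by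
  rw [sum_range_qbinom_mul_pow]
  refine prod_eq_zero (mem_range.2 hi) ?_
  rw [← zpow_add₀ q_ne_zero, show (r : ℤ) - 1 - 2 * i + (2 * i + 1 - r) = 0 by ring,
    zpow_zero, sub_self]

lemma zpow_pow_mul_qint_sub (e c : ℤ) (j : ℕ) :
    (q ^ (e + 1)) ^ j * qint (c - j)
      = (q ^ c * (q ^ e) ^ j - q ^ (-c) * (q ^ (e + 2)) ^ j) / (q - q⁻¹) := by
  simp only [qint, ← zpow_natCast, ← zpow_mul, mul_div_assoc', mul_sub,
    ← zpow_add₀ q_ne_zero]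
  ring_nf

lemma sum_range_qbinom_mul_zpow_mul_prod_qint_eq_zero {ι : Type*} (r : ℕ) (c : ι → ℤ)
    (S : Finset ι) (i : ℕ) (hi : i + #S < r) :
    ∑ j ∈ range (r + 1), (-1) ^ j * qbinom r j * (q ^ (2 * (i : ℤ) + #S + 1 - r)) ^ j
      * ∏ t ∈ S, qint (c t - j) = 0 := by
  classical
  -- a factor `[c - j]` shifts the exponent `2i + #S + 1 - r` to those for `i` and `i + 1`
  induction S using Finset.induction_on generalizing i with
  | empty => simpa using sum_range_qbinom_mul_zpow_eq_zero (by simpa using hi)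
  | insert a S ha ih =>
    rw [card_insert_of_notMem ha] at hi ⊢
    have hsplit (j : ℕ) :
        (-1) ^ j * qbinom r j * (q ^ (2 * (i : ℤ) + (#S + 1 : ℕ) + 1 - r)) ^ j
          * ∏ t ∈ insert a S, qint (c t - j)
        = q ^ c a / (q - q⁻¹) * ((-1) ^ j * qbinom r j * (q ^ (2 * (i : ℤ) + #S + 1 - r)) ^ j
            * ∏ t ∈ S, qint (c t - j))
          - q ^ (-c a) / (q - q⁻¹) * ((-1) ^ j * qbinom r j
            * (q ^ (2 * ((i + 1 : ℕ) : ℤ) + #S + 1 - r)) ^ j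
            * ∏ t ∈ S, qint (c t - j)) := by
      rw [prod_insert ha, show 2 * (i : ℤ) + (#S + 1 : ℕ) + 1 - r
        = (2 * i + #S + 1 - r) + 1 by push_cast; ring]
      have := zpow_pow_mul_qint_sub (2 * i + #S + 1 - r) (c a) j
      rw [show 2 * (i : ℤ) + #S + 1 - r + 2 = 2 * ((i + 1 : ℕ) : ℤ) + #S + 1 - r by
        push_cast; ring] at this
      linear_combination ((-1) ^ j * qbinom r j * ∏ t ∈ S, qint (c t - j)) * this
    rw [sum_congr rfl fun j _ => hsplit j, sum_sub_distrib, ← mul_sum,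
      ← mul_sum, ih i (by omega), ih (i + 1) (by omega), mul_zero, mul_zero, sub_zero]

lemma sum_range_qbinom_mul_prod_qint_eq_zero {ι : Type*} {r : ℕ} (c : ι → ℤ) (S : Finset ι)
    (hS : #S + 1 = r) :
    ∑ j ∈ range (r + 1), (-1) ^ j * qbinom r j * ∏ t ∈ S, qint (c t - j) = 0 := by
  simpa [← hS] using sum_range_qbinom_mul_zpow_mul_prod_qint_eq_zero r c S 0 (by omega)

lemma Acoef_mul_qfact_mul_qfact (r s : ℕ) (x : ℤ) :
    Acoef r x s * (qfact (s - 1) * qfact (r - s))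
      = (∏ t ∈ range (s - 1), qint (s + x - r - 1 - t))
          * ∏ t ∈ range (r - s), qint (x - t) := by
  have := qfact_ne_zero (s - 1)
  have := qfact_ne_zero (r - s)
  rw [Acoef, qbinom, qbinom]
  field_simp

lemma sum_range_qbinom_mul_Acoef_sub_eq_zero {r s : ℕ} (hs₁ : 1 ≤ s) (hs₂ : s ≤ r)
    (k : ℤ) :
    ∑ j ∈ range (r + 1), (-1) ^ j * qbinom r j * Acoef r (k - j) s = 0 := by
  let c : ℕ ⊕ ℕ → ℤ := Sum.elim (fun t => s + k - r - 1 - t) (fun t => k - t)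
  have hvan := sum_range_qbinom_mul_prod_qint_eq_zero (r := r) c
    ((range (s - 1)).disjSum (range (r - s)))
    (by rw [card_disjSum, card_range, card_range]; omega)
  have hprod (j : ℕ) : ∏ t ∈ (range (s - 1)).disjSum (range (r - s)), qint (c t - j)
      = Acoef r (k - j) s * (qfact (s - 1) * qfact (r - s)) := by
    rw [Acoef_mul_qfact_mul_qfact, prod_disjSum]
    congr 1 <;> refine prod_congr rfl fun t _ => congrArg qint ?_ <;>
      simp only [c, Sum.elim_inl, Sum.elim_inr] <;> ring
  rw [sum_congr rfl fun j _ => by rw [hprod, ← mul_assoc], ← sum_mul] at hvan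
  exact (mul_eq_zero.mp hvan).resolve_right (mul_ne_zero (qfact_ne_zero _) (qfact_ne_zero _))

lemma Acoef_natCast_of_lt_sub {r k s : ℕ} (h : k < r - s) : Acoef r k s = 0 := by
  rw [Acoef, qbinom_natCast_of_lt h, mul_zero]

lemma Acoef_natCast_of_sub_lt {r k s : ℕ} (hk : k < r) (h : r - k < s) : Acoef r k s = 0 := by
  rw [Acoef, show (s : ℤ) + k - r - 1 = (s + k - r - 1 : ℕ) by omega,
    qbinom_natCast_of_lt (by omega), zero_mul]

lemma Acoef_natCast_sub_self {r k : ℕ} (hk : k < r) : Acoef r k (r - k) = (-1) ^ (r - k - 1) := by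
  rw [Acoef, show ((r - k : ℕ) : ℤ) + k - r - 1 = -1 by omega, qbinom_neg_one,
    Nat.sub_sub_self hk.le, qbinom_self, mul_one]

def basisVec (a b : ℕ) : (Fin 2 → ℕ) →₀ K := Finsupp.single ![a, b] 1

/-- `N` stands for `k + ℓ`: the tuples `(r - s, ℓ + s + k - r)` depend on `k` and `ℓ` only
through their sum, which the relations preserve. -/
def expansion (r : ℕ) (x : ℤ) (N : ℕ) : (Fin 2 → ℕ) →₀ K :=
  ∑ s ∈ Icc 1 r, ((-1) ^ (s - 1) * Acoef r x s) • basisVec (r - s) (N + s - r)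

lemma expansion_natCast_of_lt {r k : ℕ} (hk : k < r) (l : ℕ) :
    expansion r k (k + l) = basisVec k l := by
  rw [expansion, sum_eq_single (r - k)]
  · rw [Acoef_natCast_sub_self hk, ← pow_add, ← two_mul, pow_mul, neg_one_sq, one_pow,
      one_smul, Nat.sub_sub_self hk.le, show k + l + (r - k) - r = l by omega]
  · intro s hs hne
    rw [mem_Icc] at hs
    rcases lt_or_gt_of_ne hne with h | h
    · rw [Acoef_natCast_of_lt_sub (by omega), mul_zero, zero_smul]
    · rw [Acoef_natCast_of_sub_lt hk h, mul_zero, zero_smul]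
  · intro h
    exact absurd (mem_Icc.2 ⟨by omega, Nat.sub_le r k⟩) h

lemma sum_smul_expansion_sub_eq_zero (r : ℕ) (k : ℤ) (N : ℕ) :
    ∑ j ∈ range (r + 1), ((-1) ^ j * qbinom r j) • expansion r (k - j) N = 0 := by
  simp only [expansion, smul_sum, smul_smul]
  rw [sum_comm]
  refine sum_eq_zero fun s hs => ?_
  rw [mem_Icc] at hs
  rw [← sum_smul]
  simp_rw [mul_left_comm _ ((-1 : K) ^ (s - 1)), ← mul_sum,
    sum_range_qbinom_mul_Acoef_sub_eq_zero hs.1 hs.2, mul_zero, zero_smul]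

lemma tupleRepl_pair (k l j : ℕ) (h : 0 + 1 < 2) : tupleRepl ![k, l] 0 h j = ![k - j, l + j] := by
  funext t
  fin_cases t <;> simp [tupleRepl]

lemma sum_smul_basisVec_mem_span {r k : ℕ} (hk : r ≤ k) (l : ℕ) :
    ∑ j ∈ range (r + 1), ((-1) ^ j * qbinom r j) • basisVec (k - j) (l + j)
      ∈ Submodule.span K (relSet r 2) := by
  refine Submodule.subset_span ⟨![k, l], 0, by norm_num, by simpa using hk, ?_⟩
  simp only [basisVec, tupleRepl_pair]

theorem basisVec_sub_expansion_mem_span (r k l : ℕ) :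
    basisVec k l - expansion r k (k + l) ∈ Submodule.span K (relSet r 2) := by
  induction k using Nat.strong_induction_on generalizing l with
  | _ k ih =>
  rcases lt_or_ge k r with hk | hk
  · rw [expansion_natCast_of_lt hk, sub_self]
    exact zero_mem _
  · let D (j : ℕ) := basisVec (k - j) (l + j) - expansion r (k - j : ℕ) (k + l)
    have hD (j : ℕ) (hj : j < r) : D (j + 1) ∈ Submodule.span K (relSet r 2) := by
      simpa [D, show k - (j + 1) + (l + (j + 1)) = k + l by omega] using
        ih (k - (j + 1)) (by omega) (l + (j + 1))
    -- the relation at `(k, l)` is `Σ_j (-1)^j [r ¦ j] D j`, as the expansions cancel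
    have hsum : ∑ j ∈ range (r + 1), ((-1) ^ j * qbinom r j) • D j
        = ∑ j ∈ range (r + 1), ((-1) ^ j * qbinom r j) • basisVec (k - j) (l + j) := by
      have hcast : ∀ j ∈ range (r + 1),
          ((-1) ^ j * qbinom r j) • expansion r (k - j : ℕ) (k + l)
            = ((-1) ^ j * qbinom r j) • expansion r ((k : ℤ) - j) (k + l) := fun j hj => by
        rw [Nat.cast_sub (by rw [mem_range] at hj; omega)]
      simp only [D, smul_sub, sum_sub_distrib, sum_congr rfl hcast,
        sum_smul_expansion_sub_eq_zero, sub_zero]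
    rw [sum_range_succ'] at hsum
    simp only [pow_zero, qbinom_zero_right, mul_one, one_smul, D, Nat.sub_zero, add_zero] at hsum
    rw [eq_sub_of_add_eq' hsum]
    exact Submodule.sub_mem _ (sum_smul_basisVec_mem_span hk l)
      (Submodule.sum_mem _ fun j hj => Submodule.smul_mem _ _ (hD j (mem_range.1 hj)))

theorem stmt9_general (r : ℕ) (k l : ℕ) :
    Finsupp.single (![k, l] : Fin 2 → ℕ) (1 : K)
      - ∑ s ∈ Finset.Icc (max 1 (r - k)) r,
          ((-1 : K) ^ (s - 1) * Acoef r (k : ℤ) s) •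
            Finsupp.single (![r - s, l + s + k - r] : Fin 2 → ℕ) (1 : K)
      ∈ Submodule.span K (relSet r 2) := by
  have hsum : ∑ s ∈ Icc (max 1 (r - k)) r, ((-1 : K) ^ (s - 1) * Acoef r (k : ℤ) s) •
      Finsupp.single (![r - s, l + s + k - r] : Fin 2 → ℕ) (1 : K) = expansion r k (k + l) := by
    rw [expansion, ← sum_subset (Icc_subset_Icc (le_max_left 1 (r - k)) le_rfl)]
    · refine sum_congr rfl fun s _ => ?_
      rw [basisVec, show k + l + s - r = l + s + k - r by omega]
    · intro s hs hs'
      rw [mem_Icc] at hs hs'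
      rw [max_le_iff] at hs'
      rw [Acoef_natCast_of_lt_sub (by omega), mul_zero, zero_smul]
  rw [hsum]
  exact basisVec_sub_expansion_mem_span r k l

/-- n = 2: for every `k ≥ 0` and `ℓ ∈ ℕ`,
`(k, ℓ) = Σ_{s=max(1,r−k)}^{r} (−1)^{s−1} A(k,s) (r−s, ℓ+s+k−r)` holds in `V_2`. -/
theorem stmt9 (r : ℕ) (hr : 2 ≤ r) (k l : ℕ) :
    Finsupp.single (![k, l] : Fin 2 → ℕ) (1 : K)
      - ∑ s ∈ Finset.Icc (max 1 (r - k)) r,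
          ((-1 : K) ^ (s - 1) * Acoef r (k : ℤ) s) •
            Finsupp.single (![r - s, l + s + k - r] : Fin 2 → ℕ) (1 : K)
      ∈ Submodule.span K (relSet r 2) :=
  stmt9_general r k l
end
end

section
/- Fix an integer r ≥ 2, an integer n ≥ 2, and set L = (n−1)(r−1) + 1. For every tuple (a_1, …, a_n) ∈ 𝓔_n(L), the identity Σ_{k=0}^{L} (−1)^k [L ¦ k] · ∏_{i=1}^{n−1} A(k − x_i, r − a_i) = 0 holds in ℚ(q), where x_i = a_1 + ⋯ + a_{i−1} (so x_1 = 0). -/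
noncomputable section

open Finset

/-- Entry access for a tuple, with out-of-range positions reading `0`. -/
def aget {n : ℕ} (a : Fin n → ℕ) (t : ℕ) : ℕ := if h : t < n then a ⟨t, h⟩ else 0

/-- The finite set `𝓔_n(m)` of tuples with entry sum `m` and all entries except
possibly the last one lying in `[0, r−1]`. -/
def ESet (r n m : ℕ) : Finset (Fin n → ℕ) :=
  (Fintype.piFinset fun _ : Fin n => Finset.range (m + 1)).filter
    (fun a => (∑ t, a t) = m ∧ ∀ t : Fin n, t.val < n - 1 → a t ≤ r - 1)

lemma qint_natCast_ne_zero {m : ℕ} (hm : m ≠ 0) : qint m ≠ 0 := by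
  have h : q ^ (m : ℤ) - q ^ (-(m : ℤ)) = (q ^ (2 * m) - 1) / q ^ m := by
    rw [zpow_neg, zpow_natCast]
    field_simp [q_ne_zero]
    ring
  rw [qint, h]
  exact div_ne_zero (div_ne_zero (sub_ne_zero.2 (q_pow_ne_one (by omega)))
    (pow_ne_zero _ q_ne_zero)) q_sub_q_inv_ne_zero

lemma qint_add (a b : ℤ) : qint (a + b) = q ^ a * qint b + q ^ (-b) * qint a := by
  simp only [qint, zpow_add₀ q_ne_zero, neg_add, zpow_neg]
  field_simp [q_ne_zero, q_sub_q_inv_ne_zero]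
  ring

lemma qint_natCast_add_one_ne_zero (m : ℕ) : qint ((m : ℤ) + 1) ≠ 0 := by
  exact_mod_cast qint_natCast_ne_zero m.succ_ne_zero

lemma qfact_succ (m : ℕ) : qfact (m + 1) = qfact m * qint ((m : ℤ) + 1) :=
  prod_range_succ _ _

lemma qbinom_eq_zero {n : ℤ} {m : ℕ} (h₀ : 0 ≤ n) (hnm : n < m) : qbinom n m = 0 := by
  have hzero : qint (n - n.toNat) = 0 := by rw [Int.toNat_of_nonneg h₀, sub_self, qint_zero]
  rw [qbinom, prod_eq_zero (mem_range.2 (by omega)) hzero, zero_div]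

lemma qbinom_succ (n : ℤ) (m : ℕ) :
    qbinom n (m + 1) = qbinom n m * qint (n - m) / qint ((m : ℤ) + 1) := by
  rw [qbinom, qbinom, qfact_succ, prod_range_succ]
  field_simp [qfact_ne_zero m, qint_natCast_add_one_ne_zero m]

lemma qbinom_pascal (n : ℤ) (m : ℕ) :
    qbinom n (m + 1) =
      q ^ ((m : ℤ) + 1) * qbinom (n - 1) (m + 1) + q ^ ((m : ℤ) + 1 - n) * qbinom (n - 1) m := by
  have hprod :
      ∏ t ∈ range (m + 1), qint (n - t) = qint n * ∏ t ∈ range m, qint (n - 1 - t) := by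
    rw [prod_range_succ', mul_comm]
    push_cast
    simp only [sub_zero, sub_add_eq_sub_sub, sub_right_comm n _ (1 : ℤ)]
  have hsplit : qint n =
      q ^ ((m : ℤ) + 1) * qint (n - 1 - m) + q ^ ((m : ℤ) + 1 - n) * qint ((m : ℤ) + 1) := by
    simpa [add_comm, sub_sub] using qint_add ((m : ℤ) + 1) (n - 1 - m)
  rw [qbinom, qbinom, qbinom, hprod, prod_range_succ, qfact_succ, hsplit]
  field_simp [qfact_ne_zero m, qint_natCast_add_one_ne_zero m]

theorem gaussian_binomial_theorem (L : ℕ) (z : K) :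
    ∑ k ∈ range (L + 1), (-1) ^ k * qbinom L k * z ^ k =
      ∏ i ∈ range L, (1 - q ^ ((L : ℤ) - 1 - 2 * i) * z) := by
  induction L generalizing z with
  | zero => simp [qbinom_zero_right]
  | succ L ih =>
    set f : ℕ → K := fun k => (-1) ^ k * qbinom L k * (q * z) ^ k with hf
    have hpascal : ∀ k : ℕ,
        (-1 : K) ^ (k + 1) * qbinom ((L + 1 : ℕ) : ℤ) (k + 1) * z ^ (k + 1) =
          f (k + 1) - q ^ (-(L : ℤ)) * z * f k := by
      intro k
      have h₁ : q ^ ((k : ℤ) + 1) = q ^ (k + 1) := by exact_mod_cast zpow_natCast q (k + 1)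
      have h₂ : q ^ ((k : ℤ) + 1 - ((L : ℤ) + 1)) = q ^ (-(L : ℤ)) * q ^ k := by
        rw [← zpow_natCast, ← zpow_add₀ q_ne_zero]
        ring_nf
      rw [Nat.cast_succ, qbinom_pascal, add_sub_cancel_right, h₁, h₂, hf]
      ring
    have hshift : ∑ k ∈ range (L + 1), f (k + 1) + f 0 = ∑ k ∈ range (L + 1), f k := by
      rw [← sum_range_succ', sum_range_succ, add_eq_left]
      simp only [hf, qbinom_eq_zero (m := L + 1) (Nat.cast_nonneg L) (by push_cast; omega),
        mul_zero, zero_mul]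
    have hfactor : ∀ i ∈ range L, 1 - q ^ ((L : ℤ) - 1 - 2 * i) * (q * z) =
        1 - q ^ (((L + 1 : ℕ) : ℤ) - 1 - 2 * i) * z := by
      intro i _
      rw [← mul_assoc, ← zpow_add_one₀ q_ne_zero]
      push_cast
      ring_nf
    rw [sum_range_succ', sum_congr rfl fun k _ => hpascal k, sum_sub_distrib, ← mul_sum,
      prod_range_succ, ← prod_congr rfl hfactor, ← ih, ← hshift]
    simp only [hf, pow_zero, one_mul, qbinom_zero_right, Nat.cast_succ]
    rw [show (L : ℤ) + 1 - 1 - 2 * L = -L by ring]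
    ring

lemma sum_alternating_qbinom_mul_zpow_eq_zero {d t : ℕ} (ht : t ≤ d) :
    ∑ k ∈ range (d + 1 + 1), (-1) ^ k * qbinom ((d + 1 : ℕ) : ℤ) k * (q ^ (2 * (t : ℤ) - d)) ^ k =
      0 := by
  rw [gaussian_binomial_theorem]
  refine prod_eq_zero (mem_range.2 (Nat.lt_succ_of_le ht)) ?_
  rw [← zpow_add₀ q_ne_zero]
  push_cast
  ring_nf
  simp

def IsQPolynomial (d : ℕ) (f : ℕ → K) : Prop :=
  ∃ p : Polynomial K, p.natDegree ≤ d ∧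
    ∀ k : ℕ, f k = q ^ (-(d : ℤ) * k) * p.eval (q ^ (2 * (k : ℤ)))

theorem IsQPolynomial.sum_alternating_qbinom_mul_eq_zero {d : ℕ} {f : ℕ → K}
    (hf : IsQPolynomial d f) :
    ∑ k ∈ range (d + 1 + 1), (-1) ^ k * qbinom ((d + 1 : ℕ) : ℤ) k * f k = 0 := by
  obtain ⟨p, hp, hfp⟩ := hf
  have hexpand : ∀ k, f k = ∑ t ∈ range (d + 1), p.coeff t * (q ^ (2 * (t : ℤ) - d)) ^ k := by
    intro k
    rw [hfp, Polynomial.eval_eq_sum_range' (Nat.lt_succ_of_le hp), mul_sum]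
    refine sum_congr rfl fun t _ => ?_
    rw [← zpow_natCast, ← zpow_natCast, ← zpow_mul, ← zpow_mul, mul_left_comm,
      ← zpow_add₀ q_ne_zero]
    ring_nf
  simp_rw [hexpand, mul_sum]
  rw [sum_comm]
  refine sum_eq_zero fun t ht => ?_
  simp_rw [mul_left_comm _ (p.coeff t), ← mul_sum]
  rw [sum_alternating_qbinom_mul_zpow_eq_zero (Nat.le_of_lt_succ (mem_range.1 ht)), mul_zero]

lemma isQPolynomial_const (c : K) : IsQPolynomial 0 fun _ => c :=
  ⟨Polynomial.C c, by simp, fun k => by simp⟩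

lemma IsQPolynomial.mul {d e : ℕ} {f g : ℕ → K} (hf : IsQPolynomial d f)
    (hg : IsQPolynomial e g) : IsQPolynomial (d + e) fun k => f k * g k := by
  obtain ⟨p, hp, hfp⟩ := hf
  obtain ⟨p', hp', hgp'⟩ := hg
  refine ⟨p * p', Polynomial.natDegree_mul_le.trans (add_le_add hp hp'), fun k => ?_⟩
  dsimp only
  rw [hfp, hgp', Polynomial.eval_mul, show -((d + e : ℕ) : ℤ) * k = -(d : ℤ) * k + -(e : ℤ) * k by
    push_cast; ring, zpow_add₀ q_ne_zero]
  ring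

lemma isQPolynomial_prod {ι : Type*} (s : Finset ι) (d : ι → ℕ) (f : ι → ℕ → K)
    (h : ∀ i ∈ s, IsQPolynomial (d i) (f i)) :
    IsQPolynomial (∑ i ∈ s, d i) fun k => ∏ i ∈ s, f i k := by
  classical
  induction s using Finset.induction_on with
  | empty => simpa using isQPolynomial_const 1
  | insert i s hi ih =>
    simp_rw [sum_insert hi, prod_insert hi]
    exact (h i (mem_insert_self i s)).mul (ih fun j hj => h j (mem_insert_of_mem hj))

lemma isQPolynomial_qint_add (c : ℤ) : IsQPolynomial 1 fun k => qint (k + c) := by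
  refine ⟨Polynomial.C (q ^ c / (q - q⁻¹)) * Polynomial.X - Polynomial.C (q ^ (-c) / (q - q⁻¹)),
    ?_, fun k => ?_⟩
  · compute_degree
  · have h₁ : q ^ ((k : ℤ) + c) = q ^ (-(1 : ℤ) * k) * q ^ (2 * (k : ℤ)) * q ^ c := by
      rw [← zpow_add₀ q_ne_zero, ← zpow_add₀ q_ne_zero]
      ring_nf
    have h₂ : q ^ (-((k : ℤ) + c)) = q ^ (-(1 : ℤ) * k) * q ^ (-c) := by
      rw [← zpow_add₀ q_ne_zero]
      ring_nf
    simp only [qint, Polynomial.eval_sub, Polynomial.eval_mul, Polynomial.eval_C, Polynomial.eval_X,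
      Nat.cast_one, h₁, h₂]
    ring

lemma isQPolynomial_qbinom_add (c : ℤ) (m : ℕ) : IsQPolynomial m fun k => qbinom (k + c) m := by
  induction m with
  | zero => simpa [qbinom_zero_right] using isQPolynomial_const 1
  | succ m ih =>
    have h : (fun k : ℕ => qbinom (k + c) (m + 1)) =
        fun k : ℕ => qbinom (k + c) m * qint (k + (c - m)) * (qint ((m : ℤ) + 1))⁻¹ := by
      funext k
      rw [qbinom_succ, div_eq_mul_inv, add_sub_assoc]
    rw [h]
    exact (ih.mul (isQPolynomial_qint_add _)).mul (isQPolynomial_const _)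

lemma isQPolynomial_acoef (r : ℕ) (x : ℤ) (s : ℕ) :
    IsQPolynomial (s - 1 + (r - s)) fun k => Acoef r (k - x) s := by
  have h : (fun k : ℕ => Acoef r (k - x) s) =
      fun k : ℕ => qbinom (k + ((s : ℤ) - x - r - 1)) (s - 1) * qbinom (k + -x) (r - s) := by
    funext k
    rw [Acoef]
    ring_nf
  rw [h]
  exact (isQPolynomial_qbinom_add _ _).mul (isQPolynomial_qbinom_add _ _)

lemma aget_le_of_mem_ESet {r n m : ℕ} {a : Fin n → ℕ} (ha : a ∈ ESet r n m) {t : ℕ}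
    (ht : t < n - 1) : aget a t ≤ r - 1 := by
  rw [aget, dif_pos (by omega)]
  exact (mem_filter.1 ha).2.2 ⟨t, by omega⟩ ht

theorem stmt12_general (r n : ℕ)
    (a : Fin n → ℕ) (ha : a ∈ ESet r n ((n - 1) * (r - 1) + 1)) :
    ∑ k ∈ Finset.range ((n - 1) * (r - 1) + 1 + 1),
      (-1 : K) ^ k * qbinom (((n - 1) * (r - 1) + 1 : ℕ) : ℤ) k *
        ∏ t ∈ Finset.range (n - 1),
          Acoef r ((k : ℤ) - (∑ u ∈ Finset.range t, (aget a u : ℤ))) (r - aget a t) = 0 := by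
  apply IsQPolynomial.sum_alternating_qbinom_mul_eq_zero
  have hfactor : ∀ t ∈ range (n - 1), IsQPolynomial (r - 1)
      fun k => Acoef r ((k : ℤ) - ∑ u ∈ range t, (aget a u : ℤ)) (r - aget a t) := by
    intro t ht
    have hdeg : r - aget a t - 1 + (r - (r - aget a t)) = r - 1 := by
      have := aget_le_of_mem_ESet ha (mem_range.1 ht)
      omega
    exact hdeg ▸ isQPolynomial_acoef r _ _
  simpa [mul_comm] using isQPolynomial_prod (range (n - 1)) (fun _ => r - 1) _ hfactor

/-- with `L = (n−1)(r−1)+1`, for every `(a_1,…,a_n) ∈ 𝓔_n(L)`,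
`Σ_{k=0}^{L} (−1)^k [L ¦ k] ∏_{i=1}^{n−1} A(k−x_i, r−a_i) = 0` in `ℚ(q)`,
where `x_i = a_1+⋯+a_{i−1}`. -/
theorem stmt12 (r n : ℕ) (hr : 2 ≤ r) (hn : 2 ≤ n)
    (a : Fin n → ℕ) (ha : a ∈ ESet r n ((n - 1) * (r - 1) + 1)) :
    ∑ k ∈ Finset.range ((n - 1) * (r - 1) + 1 + 1),
      (-1 : K) ^ k * qbinom (((n - 1) * (r - 1) + 1 : ℕ) : ℤ) k *
        ∏ t ∈ Finset.range (n - 1),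
          Acoef r ((k : ℤ) - (∑ u ∈ Finset.range t, (aget a u : ℤ))) (r - aget a t) = 0 :=
  stmt12_general r n a ha
end
end
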